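/- The symmetric double star with 5 edges (two adjacent vertices of degree 3, each with two pendant leaves) admits no edge labeling with nonzero elements of ℤ₃ such that adjacent vertices receive distinct induced weights. -/

import Mathlib

/-- Edge list of the symmetric double star with 5 edges: centers `0, 1`, leaves `2, 3`
attached to `0` and leaves `4, 5` attached to `1`. -/
def dsEdges : List (Fin 6 × Fin 6) := [(0, 1), (0, 2), (0, 3), (1, 4), (1, 5)]

/-- The symmetric double star with 5 edges. -/
def doubleStar : SimpleGraph (Fin 6) where
  Adj u v := (u, v) ∈ dsEdges ∨ (v, u) ∈ dsEdges
  symm := by constructor; decide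
  loopless := by constructor; decide

instance : DecidableRel doubleStar.Adj := fun u v =>
  inferInstanceAs (Decidable ((u, v) ∈ dsEdges ∨ (v, u) ∈ dsEdges))

lemma aux_10 (a b c d e : ZMod 3) (ha : a ≠ 0) (hb : b ≠ 0) (hc : c ≠ 0)
    (hd : d ≠ 0) (he : e ≠ 0) (h01 : a + b + c ≠ a + d + e)
    (h02 : a + b + c ≠ b) (h03 : a + b + c ≠ c)
    (h14 : a + d + e ≠ d) (h15 : a + d + e ≠ e) : False := by
  revert ha hb hc hd he h01 h02 h03 h14 h15
  revert a b c d e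
  decide

/-- The symmetric double star with 5 edges admits no edge labeling with
nonzero elements of `ℤ₃` such that adjacent vertices receive distinct induced weights. -/
theorem stmt_10 :
    ¬ ∃ f : Fin 6 → Fin 6 → ZMod 3,
      (∀ u v, f u v = f v u) ∧
      (∀ u v, doubleStar.Adj u v → f u v ≠ 0) ∧
      (∀ u v, doubleStar.Adj u v →
        (∑ x ∈ doubleStar.neighborFinset u, f u x) ≠
          (∑ x ∈ doubleStar.neighborFinset v, f v x)) := by
  rintro ⟨f, hsym, hnz, hw⟩
  have e0 : doubleStar.neighborFinset 0 = {1, 2, 3} := by decide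
  have e1 : doubleStar.neighborFinset 1 = {0, 4, 5} := by decide
  have e2 : doubleStar.neighborFinset 2 = {0} := by decide
  have e3 : doubleStar.neighborFinset 3 = {0} := by decide
  have e4 : doubleStar.neighborFinset 4 = {1} := by decide
  have e5 : doubleStar.neighborFinset 5 = {1} := by decide
  have h01 := hw 0 1 (by decide)
  have h02 := hw 0 2 (by decide)
  have h03 := hw 0 3 (by decide)
  have h14 := hw 1 4 (by decide)
  have h15 := hw 1 5 (by decide)
  rw [e0, e1] at h01
  rw [e0, e2] at h02
  rw [e0, e3] at h03
  rw [e1, e4] at h14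
  rw [e1, e5] at h15
  simp [Finset.sum_insert, Finset.sum_singleton, hsym 1 0, hsym 2 0, hsym 3 0,
    hsym 4 1, hsym 5 1] at h01 h02 h03 h14 h15
  exact aux_10 (f 0 1) (f 0 2) (f 0 3) (f 1 4) (f 1 5)
    (hnz 0 1 (by decide)) (hnz 0 2 (by decide)) (hnz 0 3 (by decide))
    (hnz 1 4 (by decide)) (hnz 1 5 (by decide))
    (by simpa [hsym 1 0, add_comm, add_left_comm, add_assoc] using h01)
    (by simpa [add_comm, add_left_comm, add_assoc] using h02)
    (by simpa [add_comm, add_left_comm, add_assoc] using h03)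
    (by simpa [hsym 1 0, add_comm, add_left_comm, add_assoc] using h14)
    (by simpa [hsym 1 0, add_comm, add_left_comm, add_assoc] using h15)
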